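/- arXiv:1706.00152 — 3 statements merged into one kernel-verified Lean document; each statement's English description precedes it below -/
import Mathlib

section
/- Let $n = 2p$, $J = J_-(p)$, and let $U \in U_n$ satisfy $UJ = J\bar{U}$ with all entries in $\{0,1\}$. Then $U$, viewed as a $p \times p$ matrix of $2 \times 2$ blocks, has each block equal to either the zero block or the $2\times 2$ identity, with exactly one identity block per block-row and block-column. Consequently the group $\bar{S}_n = \{U \in U_n \mid UJ = J\bar{U},\ U_{ij} \in \{0,1\}\}$ is isomorphic to the symmetric group $S_p$. -/
/-- The super-identity `J_-(p)`: block-diagonal with `p` blocks `!![0,1;-1,0]`. -/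
def Jminus (p : ℕ) : Matrix (Fin (2 * p)) (Fin (2 * p)) ℂ :=
  Matrix.of fun i j =>
    if (i : ℕ) % 2 = 0 then (if (j : ℕ) = (i : ℕ) + 1 then 1 else 0)
    else (if (j : ℕ) = (i : ℕ) - 1 then -1 else 0)

/-- The index `2k + a` of position `a` in the `k`-th pair. -/
def pidx (p : ℕ) (k : Fin p) (a : Fin 2) : Fin (2 * p) :=
  ⟨2 * (k : ℕ) + (a : ℕ), by omega⟩

/-- The `2 × 2` block of `U` at block-position `(k, l)`. -/
def blk (p : ℕ) (U : Matrix (Fin (2 * p)) (Fin (2 * p)) ℂ) (k l : Fin p) :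
    Matrix (Fin 2) (Fin 2) ℂ :=
  Matrix.of fun a b => U (pidx p k a) (pidx p l b)

/-!
A unitary matrix with entries in `{0, 1}` has exactly one `1` in each row and column, so it is a
permutation matrix `P_π`. Being real, it satisfies `U J = J Ū` iff `P_π` commutes with `J`, i.e.
`J (π i) (π j) = J i j`. The entries of `J` equal to `1` are exactly those at `(2k, 2k+1)`, so `π`
sends each pair `(2k, 2k+1)` to some pair `(2l, 2l+1)` in order: `π` is induced by a permutation
`σ` of the pairs, and the `(k, l)` block of `U` is the identity if `σ k = l` and zero otherwise.
Conversely every `σ` gives such a matrix, and `σ ↦ P_π` is an injective homomorphism.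
-/

open Matrix Equiv Finset

lemma Fintype.existsUnique_eq_one_of_sum_eq_one {ι R : Type*} [Fintype ι]
    [AddCommMonoidWithOne R] [CharZero R] {f : ι → R} (h01 : ∀ i, f i = 0 ∨ f i = 1)
    (hsum : ∑ i, f i = 1) : ∃! i, f i = 1 := by
  classical
  have hf : f = fun i => if f i = 1 then 1 else 0 := by
    funext i
    rcases h01 i with h | h <;> simp [h]
  rw [hf, sum_boole, Nat.cast_eq_one, card_eq_one_iff_existsUnique] at hsum
  simpa using hsum

section PermMatrix

variable {n R : Type*} [Fintype n] [DecidableEq n]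

lemma Matrix.permMatrix_mem_unitaryGroup [CommRing R] [StarRing R] (σ : Perm n) :
    σ.permMatrix R ∈ unitaryGroup n R := by
  rw [mem_unitaryGroup_iff, star_eq_conjTranspose, conjTranspose_permMatrix, ← permMatrix_mul,
    inv_mul_cancel, permMatrix_one]

lemma Matrix.permMatrix_mul_eq_mul_permMatrix_iff [NonAssocSemiring R] (σ : Perm n)
    (A : Matrix n n R) :
    σ.permMatrix R * A = A * σ.permMatrix R ↔ A.submatrix σ σ = A := by
  rw [Perm.permMatrix, PEquiv.toMatrix_toPEquiv_mul, PEquiv.mul_toMatrix_toPEquiv]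
  constructor
  · intro h
    ext i j
    simpa using congrFun (congrFun h i) (σ j)
  · intro h
    ext i j
    conv_rhs => rw [← h]
    simp

def Matrix.permMatrixUnitaryHom (n R : Type*) [Fintype n] [DecidableEq n] [CommRing R]
    [StarRing R] : Perm n →* unitaryGroup n R :=
  (permMatrixHom (R := R)).codRestrict (unitaryGroup n R) fun σ => by
    rw [permMatrixHom_apply]
    exact permMatrix_mem_unitaryGroup σ⁻¹

lemma Matrix.permMatrixUnitaryHom_injective [CommRing R] [StarRing R] [Nontrivial R] :
    Function.Injective (permMatrixUnitaryHom n R) := fun σ τ h => by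
  have h' : σ⁻¹.permMatrix R = τ⁻¹.permMatrix R := congrArg Subtype.val h
  have h'' := PEquiv.toMatrix_injective h'
  exact inv_injective <| Equiv.ext fun i => by simpa using DFunLike.congr_fun h'' i

variable [CommRing R] [StarRing R] [CharZero R] {U : Matrix n n R}

lemma Matrix.existsUnique_row_eq_one (hU : U ∈ unitaryGroup n R)
    (h01 : ∀ i j, U i j = 0 ∨ U i j = 1) (i : n) : ∃! j, U i j = 1 := by
  refine Fintype.existsUnique_eq_one_of_sum_eq_one (h01 i) ?_
  have hsq : ∀ j, U i j * star U j i = U i j := fun j => by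
    rcases h01 i j with h | h <;> simp [star_apply, h]
  simpa only [mul_apply, hsq, one_apply_eq] using
    congrFun (congrFun (mem_unitaryGroup_iff.1 hU) i) i

lemma Matrix.existsUnique_col_eq_one (hU : U ∈ unitaryGroup n R)
    (h01 : ∀ i j, U i j = 0 ∨ U i j = 1) (j : n) : ∃! i, U i j = 1 := by
  have hstar : ∀ i j, star (U i j) = U i j := fun i j => by
    rcases h01 i j with h | h <;> simp [h]
  have h01' : ∀ i j, star U i j = 0 ∨ star U i j = 1 := fun i j => by
    simpa [star_apply, hstar] using h01 j i
  simpa [star_apply, hstar] using existsUnique_row_eq_one (Unitary.star_mem hU) h01' j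

theorem Matrix.exists_eq_permMatrix_of_mem_unitaryGroup (hU : U ∈ unitaryGroup n R)
    (h01 : ∀ i j, U i j = 0 ∨ U i j = 1) : ∃ σ : Perm n, U = σ.permMatrix R := by
  choose f hf hf_unique using existsUnique_row_eq_one hU h01
  have hinj : Function.Injective f := fun i i' h =>
    (existsUnique_col_eq_one hU h01 (f i)).unique (hf i) (h ▸ hf i')
  refine ⟨Equiv.ofBijective f hinj.bijective_of_finite, ?_⟩
  ext i j
  by_cases hij : f i = j
  · subst hij
    simp [hf i]
  · have : U i j ≠ 1 := fun h => hij (hf_unique i j h).symm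
    simpa [hij, Ne.symm hij] using (h01 i j).resolve_right this

end PermMatrix

section Blocks

variable {p : ℕ}

def pairEquiv (p : ℕ) : Fin p × Fin 2 ≃ Fin (2 * p) :=
  finProdFinEquiv.trans (finCongr (mul_comm p 2))

@[simp] lemma pairEquiv_apply (x : Fin p × Fin 2) : pairEquiv p x = pidx p x.1 x.2 := by
  ext
  simp [pairEquiv, pidx, add_comm]

@[simp] lemma pairEquiv_symm_pidx (k : Fin p) (a : Fin 2) :
    (pairEquiv p).symm (pidx p k a) = (k, a) := by
  rw [symm_apply_eq, pairEquiv_apply]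

lemma pidx_inj {k l : Fin p} {a b : Fin 2} : pidx p k a = pidx p l b ↔ k = l ∧ a = b := by
  simpa using (pairEquiv p).injective.eq_iff (a := (k, a)) (b := (l, b))

lemma exists_pidx_eq (i : Fin (2 * p)) : ∃ k a, pidx p k a = i := by
  simpa using (pairEquiv p).surjective i

lemma Jminus_pidx (k l : Fin p) (a b : Fin 2) :
    Jminus p (pidx p k a) (pidx p l b) = if k = l then !![0, 1; -1, 0] a b else 0 := by
  simp only [Jminus, of_apply, pidx, Fin.ext_iff]
  fin_cases a <;> fin_cases b <;> simp [eq_comm] <;> omega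

lemma Jminus_pidx_eq_one_iff {k l : Fin p} {a b : Fin 2} :
    Jminus p (pidx p k a) (pidx p l b) = 1 ↔ k = l ∧ a = 0 ∧ b = 1 := by
  rw [Jminus_pidx]
  split_ifs with h <;> fin_cases a <;> fin_cases b <;> norm_num [h]

def blockPerm (p : ℕ) : Perm (Fin p) →* Perm (Fin (2 * p)) where
  toFun σ := (pairEquiv p).permCongr (σ.prodCongr (Equiv.refl _))
  map_one' := by ext; simp
  map_mul' σ τ := by ext; simp

@[simp] lemma blockPerm_pidx (σ : Perm (Fin p)) (k : Fin p) (a : Fin 2) :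
    blockPerm p σ (pidx p k a) = pidx p (σ k) a := by
  simp [blockPerm, permCongr_apply]

lemma blockPerm_injective : Function.Injective (blockPerm p) := fun σ τ h => by
  ext k
  have := DFunLike.congr_fun h (pidx p k 0)
  simp only [blockPerm_pidx, pidx_inj] at this
  rw [this.1]

lemma Jminus_submatrix_blockPerm (σ : Perm (Fin p)) :
    (Jminus p).submatrix (blockPerm p σ) (blockPerm p σ) = Jminus p := by
  ext i j
  obtain ⟨k, a, rfl⟩ := exists_pidx_eq i
  obtain ⟨l, b, rfl⟩ := exists_pidx_eq j
  simp [Jminus_pidx, σ.injective.eq_iff]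

lemma exists_blockPerm_eq_of_Jminus_submatrix {π : Perm (Fin (2 * p))}
    (hπ : (Jminus p).submatrix π π = Jminus p) : ∃ σ, blockPerm p σ = π := by
  have hpair : ∀ k, ∃ l, ∀ a, π (pidx p k a) = pidx p l a := by
    intro k
    obtain ⟨l, a, hla⟩ := exists_pidx_eq (π (pidx p k 0))
    obtain ⟨l', b, hlb⟩ := exists_pidx_eq (π (pidx p k 1))
    have h1 : Jminus p (pidx p l a) (pidx p l' b) = 1 := by
      have := congrFun (congrFun hπ (pidx p k 0)) (pidx p k 1)
      rw [submatrix_apply, ← hla, ← hlb] at this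
      simp [this, Jminus_pidx_eq_one_iff]
    obtain ⟨rfl, rfl, rfl⟩ := Jminus_pidx_eq_one_iff.1 h1
    exact ⟨l, Fin.forall_fin_two.2 ⟨hla.symm, hlb.symm⟩⟩
  choose f hf using hpair
  have hinj : Function.Injective f := fun k k' h => by
    have := π.injective ((hf k 0).trans (h ▸ (hf k' 0).symm))
    exact (pidx_inj.1 this).1
  refine ⟨Equiv.ofBijective f hinj.bijective_of_finite, Equiv.ext fun i => ?_⟩
  obtain ⟨k, a, rfl⟩ := exists_pidx_eq i
  simp [hf]

lemma blk_permMatrix_blockPerm (σ : Perm (Fin p)) (k l : Fin p) :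
    blk p ((blockPerm p σ).permMatrix ℂ) k l = if σ k = l then 1 else 0 := by
  ext a b
  by_cases h : σ k = l <;> simp [blk, pidx_inj, h, one_apply]

theorem exists_permMatrix_blockPerm_iff (U : Matrix (Fin (2 * p)) (Fin (2 * p)) ℂ) :
    (∃ σ, (blockPerm p σ).permMatrix ℂ = U) ↔ U ∈ unitaryGroup (Fin (2 * p)) ℂ ∧
      U * Jminus p = Jminus p * U.map (starRingEnd ℂ) ∧ ∀ i j, U i j = 0 ∨ U i j = 1 := by
  constructor
  · rintro ⟨σ, rfl⟩
    refine ⟨permMatrix_mem_unitaryGroup _, ?_, fun i j => by simp [em']⟩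
    rw [PEquiv.map_toMatrix]
    exact (permMatrix_mul_eq_mul_permMatrix_iff _ _).2 (Jminus_submatrix_blockPerm σ)
  · rintro ⟨hU, hJ, h01⟩
    obtain ⟨π, rfl⟩ := exists_eq_permMatrix_of_mem_unitaryGroup hU h01
    rw [PEquiv.map_toMatrix, permMatrix_mul_eq_mul_permMatrix_iff] at hJ
    obtain ⟨σ, rfl⟩ := exists_blockPerm_eq_of_Jminus_submatrix hJ
    exact ⟨σ, rfl⟩

end Blocks

/-- A unitary `U` with `U J = J Ū` (`J = J_-(p)`) and entries in `{0,1}` has all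
`2 × 2` blocks equal to `0` or `1`, with exactly one identity block in each block-row
and block-column; consequently `S̄_n ≅ S_p`. -/
theorem stmt_9 (p : ℕ) :
    (∀ U : Matrix (Fin (2 * p)) (Fin (2 * p)) ℂ,
      U ∈ Matrix.unitaryGroup (Fin (2 * p)) ℂ →
      U * Jminus p = Jminus p * U.map (starRingEnd ℂ) →
      (∀ i j, U i j = 0 ∨ U i j = 1) →
      (∀ k l : Fin p, blk p U k l = 0 ∨ blk p U k l = 1) ∧
      (∀ k : Fin p, ∃! l : Fin p, blk p U k l = 1) ∧
      (∀ l : Fin p, ∃! k : Fin p, blk p U k l = 1)) ∧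
    ∃ H : Subgroup (Matrix.unitaryGroup (Fin (2 * p)) ℂ),
      (∀ U : Matrix.unitaryGroup (Fin (2 * p)) ℂ,
        U ∈ H ↔ ((U : Matrix (Fin (2 * p)) (Fin (2 * p)) ℂ) * Jminus p =
            Jminus p * (U : Matrix (Fin (2 * p)) (Fin (2 * p)) ℂ).map (starRingEnd ℂ) ∧
          ∀ i j, (U : Matrix (Fin (2 * p)) (Fin (2 * p)) ℂ) i j = 0 ∨
            (U : Matrix (Fin (2 * p)) (Fin (2 * p)) ℂ) i j = 1)) ∧
      Nonempty (H ≃* Equiv.Perm (Fin p)) := by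
  constructor
  · intro U hU hJ h01
    obtain ⟨σ, rfl⟩ := (exists_permMatrix_blockPerm_iff U).2 ⟨hU, hJ, h01⟩
    have hblk : ∀ k l, blk p ((blockPerm p σ).permMatrix ℂ) k l = 1 ↔ σ k = l := fun k l => by
      simp [blk_permMatrix_blockPerm]
    refine ⟨fun k l => ?_, fun k => ⟨σ k, (hblk k _).2 rfl, fun l h => ((hblk k l).1 h).symm⟩,
      fun l => ⟨σ.symm l, (hblk _ l).2 (σ.apply_symm_apply l), fun k h => ?_⟩⟩
    · rw [blk_permMatrix_blockPerm]
      split_ifs <;> simp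
    · rw [← (hblk k l).1 h, σ.symm_apply_apply]
  · refine ⟨((permMatrixUnitaryHom _ ℂ).comp (blockPerm p)).range, fun U => ?_,
      ⟨(MonoidHom.ofInjective (f := (permMatrixUnitaryHom _ ℂ).comp (blockPerm p))
        (permMatrixUnitaryHom_injective.comp blockPerm_injective)).symm⟩⟩
    have key := exists_permMatrix_blockPerm_iff (U : Matrix (Fin (2 * p)) (Fin (2 * p)) ℂ)
    simp only [U.2, true_and] at key
    rw [MonoidHom.mem_range, ← key]
    constructor <;> rintro ⟨σ, hσ⟩ <;> refine ⟨σ⁻¹, ?_⟩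
    · simpa [permMatrixUnitaryHom] using congrArg Subtype.val hσ
    · exact Subtype.ext (by simpa [permMatrixUnitaryHom] using hσ)
end

section
/- Let $n = 2p+q$, $J = J_+(p,q)$, and let $U \in U_n$ satisfy $UJ = J\bar{U}$ with all entries in $\{0,1\}$. Then the group $\bar{S}_n = \{U \in U_n \mid UJ = J\bar{U},\ U_{ij} \in \{0,1\}\}$ is isomorphic to the direct product $H_p \times S_q$, where $H_p$ is the hyperoctahedral group (signed permutation group) of rank $p$ and $S_q$ the symmetric group on $q$ letters. -/
/-!
A unitary matrix with entries in `{0, 1}` is real, and is the permutation matrix of some `ρ`.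
`J_+(p,q)` is itself the permutation matrix of the involution `σ_J` swapping `2k` and `2k + 1`
for `k < p` and fixing the last `q` indices, so `U J = J Ū` says exactly that `ρ` commutes
with `σ_J`. Reindexing `Fin (2p + q)` by `(Fin p × Bool) ⊕ Fin q`, `σ_J` flips the `Bool`
coordinate and fixes `Fin q`; a permutation commuting with it preserves its fixed points, so it is
a pair `(κ, τ)` with `τ ∈ S_q` and `κ` commuting with the flip. Sending such a `κ` to the signed
permutation matrix whose `b`-th column is `±e_c` when `κ (b, false) = (c, ±)` is an injective
homomorphism onto the unitary matrices with entries in `{0, 1, -1}`: that matrix acts on the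
vectors `±e_c` exactly as `κ` acts on `Fin p × Bool`.
-/

/-- The super-identity `J_+(p,q)`: block-diagonal with `p` blocks `!![0,1;1,0]`
followed by the identity `I_q`. -/
def Jplus (p q : ℕ) : Matrix (Fin (2 * p + q)) (Fin (2 * p + q)) ℂ :=
  Matrix.of fun i j =>
    if (i : ℕ) < 2 * p then
      (if (j : ℕ) = (if (i : ℕ) % 2 = 0 then (i : ℕ) + 1 else (i : ℕ) - 1) then 1 else 0)
    else (if i = j then 1 else 0)

open Equiv Matrix

section PermMatrix

variable {n : Type*} [DecidableEq n] [Fintype n]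

lemma Matrix.permMatrixHom_apply_apply {R : Type*} [NonAssocSemiring R] (σ : Perm n) (i j : n) :
    (permMatrixHom σ : Matrix n n R) i j = if σ j = i then 1 else 0 := by
  simp [PEquiv.toMatrix_apply, eq_comm, Equiv.eq_symm_apply]

lemma Matrix.permMatrixHom_injective {R : Type*} [NonAssocSemiring R] [Nontrivial R] :
    Function.Injective (permMatrixHom : Perm n →* Matrix n n R) := by
  intro σ τ h
  ext j
  simpa [permMatrixHom_apply_apply, eq_comm] using congrFun₂ h (σ j) j

lemma Matrix.permMatrixHom_mem_unitaryGroup {R : Type*} [CommRing R] [StarRing R] (σ : Perm n) :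
    permMatrixHom σ ∈ unitaryGroup n R := by
  rw [mem_unitaryGroup_iff', star_eq_conjTranspose, permMatrixHom_apply, conjTranspose_permMatrix,
    ← permMatrix_mul]
  simp

variable {R : Type*} [CommRing R] [StarRing R]

variable (n R) in
def permUnitaryHom : Perm n →* unitaryGroup n R :=
  (permMatrixHom : Perm n →* Matrix n n R).codRestrict (unitaryGroup n R)
    permMatrixHom_mem_unitaryGroup

lemma permUnitaryHom_injective [Nontrivial R] : Function.Injective (permUnitaryHom n R) :=
  fun _ _ h => permMatrixHom_injective (congrArg Subtype.val h)

end PermMatrix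

section Monomial

variable {𝕜 ι n : Type*} [RCLike 𝕜] [Fintype ι] [DecidableEq n] [Fintype n]

lemma existsUnique_ne_zero_of_sum_norm_sq_eq_one {v : ι → 𝕜} (hv : ∀ i, v i = 0 ∨ ‖v i‖ = 1)
    (hs : ∑ i, ‖v i‖ ^ 2 = 1) : ∃! i, v i ≠ 0 := by
  classical
  have hsum : ∑ i, ‖v i‖ ^ 2 = (Finset.univ.filter fun i => v i ≠ 0).card := by
    rw [Finset.card_filter, Nat.cast_sum]
    refine Finset.sum_congr rfl fun i _ => ?_
    rcases hv i with h | h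
    · simp [h]
    · simp [h, ← norm_ne_zero_iff]
  obtain ⟨a, ha⟩ := Finset.card_eq_one.mp (by exact_mod_cast hsum ▸ hs)
  obtain ⟨ha, hunique⟩ := Finset.eq_singleton_iff_unique_mem.mp ha
  exact ⟨a, by simpa using ha, fun b hb => hunique b (by simpa using hb)⟩

lemma Matrix.sum_norm_sq_apply_left_of_mem_unitaryGroup {U : Matrix n n 𝕜}
    (hU : U ∈ unitaryGroup n 𝕜) (j : n) : ∑ i, ‖U i j‖ ^ 2 = 1 := by
  have h := congrFun₂ (mem_unitaryGroup_iff'.mp hU) j j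
  simp only [mul_apply, star_apply, RCLike.star_def, RCLike.conj_mul, one_apply_eq] at h
  exact_mod_cast h

lemma Matrix.sum_norm_sq_apply_right_of_mem_unitaryGroup {U : Matrix n n 𝕜}
    (hU : U ∈ unitaryGroup n 𝕜) (i : n) : ∑ j, ‖U i j‖ ^ 2 = 1 := by
  have h := congrFun₂ (mem_unitaryGroup_iff.mp hU) i i
  simp only [mul_apply, star_apply, RCLike.star_def, RCLike.mul_conj, one_apply_eq] at h
  exact_mod_cast h

lemma Matrix.exists_perm_ne_zero_iff_of_mem_unitaryGroup {U : Matrix n n 𝕜}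
    (hU : U ∈ unitaryGroup n 𝕜) (hentries : ∀ i j, U i j = 0 ∨ ‖U i j‖ = 1) :
    ∃ σ : Perm n, ∀ i j, U i j ≠ 0 ↔ σ j = i := by
  have hcol (j : n) : ∃! i, U i j ≠ 0 := existsUnique_ne_zero_of_sum_norm_sq_eq_one
    (fun i => hentries i j) (sum_norm_sq_apply_left_of_mem_unitaryGroup hU j)
  have hrow (i : n) : ∃! j, U i j ≠ 0 := existsUnique_ne_zero_of_sum_norm_sq_eq_one
    (hentries i) (sum_norm_sq_apply_right_of_mem_unitaryGroup hU i)
  choose f hf hf_unique using hcol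
  have hf_inj : Function.Injective f := fun j j' h => (hrow (f j)).unique (hf j) (h ▸ hf j')
  refine ⟨Equiv.ofBijective f hf_inj.bijective_of_finite, fun i j => ⟨fun hij => ?_, ?_⟩⟩
  · exact (hf_unique j i hij).symm
  · rintro rfl
    exact hf j

lemma Matrix.exists_permMatrixHom_eq_of_mem_unitaryGroup {U : Matrix n n 𝕜}
    (hU : U ∈ unitaryGroup n 𝕜) (h01 : ∀ i j, U i j = 0 ∨ U i j = 1) :
    ∃ σ : Perm n, permMatrixHom σ = U := by
  obtain ⟨σ, hσ⟩ := exists_perm_ne_zero_iff_of_mem_unitaryGroup hU fun i j => by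
    rcases h01 i j with h | h <;> simp [h]
  refine ⟨σ, ext fun i j => ?_⟩
  rw [permMatrixHom_apply_apply]
  split_ifs with h
  · exact ((h01 i j).resolve_left ((hσ i j).mpr h)).symm
  · exact (not_not.mp (mt (hσ i j).mp h)).symm

lemma Matrix.map_conj_permMatrixHom (σ : Perm n) :
    (permMatrixHom σ : Matrix n n 𝕜).map (starRingEnd 𝕜) = permMatrixHom σ := by
  ext i j
  rw [map_apply, permMatrixHom_apply_apply]
  split_ifs <;> simp

lemma Matrix.exists_mem_centralizer_permMatrixHom_eq_iff {U : Matrix n n 𝕜}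
    (hU : U ∈ unitaryGroup n 𝕜) (σ₀ : Perm n) :
    (U * permMatrixHom σ₀ = permMatrixHom σ₀ * U.map (starRingEnd 𝕜) ∧
        ∀ i j, U i j = 0 ∨ U i j = 1) ↔
      ∃ ρ ∈ Subgroup.centralizer {σ₀}, permMatrixHom ρ = U := by
  constructor
  · rintro ⟨hcomm, h01⟩
    obtain ⟨ρ, rfl⟩ := exists_permMatrixHom_eq_of_mem_unitaryGroup hU h01
    rw [map_conj_permMatrixHom, ← map_mul, ← map_mul] at hcomm
    exact ⟨ρ, Subgroup.mem_centralizer_singleton_iff.mpr (permMatrixHom_injective hcomm), rfl⟩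
  · rintro ⟨ρ, hρ, rfl⟩
    refine ⟨?_, fun i j => ?_⟩
    · rw [map_conj_permMatrixHom, ← map_mul, ← map_mul,
        Subgroup.mem_centralizer_singleton_iff.mp hρ]
    · rw [permMatrixHom_apply_apply]
      split_ifs <;> simp

end Monomial

lemma MulEquiv.apply_mem_centralizer_singleton_iff {G H : Type*} [Group G] [Group H]
    (f : G ≃* H) {a g : G} : f g ∈ Subgroup.centralizer {f a} ↔ g ∈ Subgroup.centralizer {a} := by
  simp only [Subgroup.mem_centralizer_singleton_iff, ← map_mul, f.injective.eq_iff]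

lemma Equiv.Perm.mem_centralizer_sumCongr_one_iff {X Y : Type*} [Finite X] [Finite Y]
    {α : Perm X} (hα : ∀ x, α x ≠ x) {ρ : Perm (X ⊕ Y)} :
    ρ ∈ Subgroup.centralizer {sumCongr α 1} ↔
      ∃ κ ∈ Subgroup.centralizer {α}, ∃ τ : Perm Y, sumCongr κ τ = ρ := by
  simp only [Subgroup.mem_centralizer_singleton_iff]
  constructor
  · intro hρ
    have hinl : Set.MapsTo ρ (Set.range Sum.inl) (Set.range Sum.inl) := by
      rintro _ ⟨x, rfl⟩
      rcases hx : ρ (Sum.inl x) with y | y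
      · exact ⟨y, rfl⟩
      · have hcomm := congrArg (· (Sum.inl x)) hρ
        simp only [Perm.mul_apply, sumCongr_apply, Sum.map_inl, hx, Sum.map_inr] at hcomm
        exact absurd (Sum.inl_injective (ρ.injective (hcomm.trans hx.symm))) (hα x)
    obtain ⟨⟨κ, τ⟩, rfl⟩ := mem_sumCongrHom_range_of_perm_mapsTo_inl hinl
    simp only [Perm.sumCongrHom_apply, Perm.sumCongr_mul] at hρ
    have hpair : (κ * α, τ * 1) = (α * κ, 1 * τ) := Perm.sumCongrHom_injective hρ
    exact ⟨κ, congrArg Prod.fst hpair, τ, rfl⟩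
  · rintro ⟨κ, hκ, τ, rfl⟩
    simp only [Perm.sumCongr_mul, hκ, mul_one, one_mul]

section Hyperoctahedral

variable (X : Type*)

def signFlip : Perm (X × Bool) := (Equiv.refl X).prodCongr boolNot

abbrev hyperoctahedral : Subgroup (Perm (X × Bool)) := Subgroup.centralizer {signFlip X}

variable {X}

lemma apply_signFlip_of_mem_hyperoctahedral {π : Perm (X × Bool)} (hπ : π ∈ hyperoctahedral X)
    (x : X × Bool) : π (signFlip X x) = signFlip X (π x) :=
  congrArg (· x) (Subgroup.mem_centralizer_singleton_iff.mp hπ)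

lemma signFlip_apply_ne (x : X × Bool) : signFlip X x ≠ x := by
  obtain ⟨c, _ | _⟩ := x <;> simp [signFlip]

variable [DecidableEq X] {𝕜 : Type*} [RCLike 𝕜]

def signedBasis (x : X × Bool) : X → 𝕜 := Pi.single x.1 (if x.2 then -1 else 1)

def signedPermMatrix (π : Perm (X × Bool)) : Matrix X X 𝕜 :=
  of fun a b => signedBasis (π (b, false)) a

lemma signedBasis_signFlip (x : X × Bool) :
    (signedBasis (signFlip X x) : X → 𝕜) = -signedBasis x := by
  obtain ⟨c, _ | _⟩ := x <;> simp [signedBasis, signFlip, Pi.single_neg]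

lemma signedPermMatrix_one : (signedPermMatrix 1 : Matrix X X 𝕜) = 1 := by
  ext a b
  simp [signedPermMatrix, signedBasis, one_apply, Pi.single_apply]

variable [Fintype X]

lemma star_signedBasis_dotProduct (x y : X × Bool) :
    star (signedBasis x : X → 𝕜) ⬝ᵥ signedBasis y =
      if x = y then 1 else if x = signFlip X y then -1 else 0 := by
  obtain ⟨c, s⟩ := x
  obtain ⟨d, t⟩ := y
  by_cases hcd : c = d
  · subst hcd
    cases s <;> cases t <;> simp [signedBasis, signFlip]
  · simp [signedBasis, signFlip, hcd]

lemma signedBasis_injective : Function.Injective (signedBasis : X × Bool → X → 𝕜) := by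
  intro x y h
  have hxy := star_signedBasis_dotProduct (𝕜 := 𝕜) x y
  rw [← h, star_signedBasis_dotProduct, if_pos rfl] at hxy
  split_ifs at hxy with hx
  · exact hx
  · norm_num at hxy
  · norm_num at hxy

lemma signedPermMatrix_mulVec_signedBasis {π : Perm (X × Bool)} (hπ : π ∈ hyperoctahedral X)
    (x : X × Bool) : (signedPermMatrix π : Matrix X X 𝕜) *ᵥ signedBasis x = signedBasis (π x) := by
  obtain ⟨c, _ | _⟩ := x
  · ext a
    simp [signedBasis, signedPermMatrix]
  · have hflip : π (c, true) = signFlip X (π (c, false)) :=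
      apply_signFlip_of_mem_hyperoctahedral hπ (c, false)
    rw [hflip, signedBasis_signFlip]
    ext a
    simp [signedBasis, mulVec_single, signedPermMatrix]

lemma signedPermMatrix_mul {π : Perm (X × Bool)} (hπ : π ∈ hyperoctahedral X) (π' : Perm (X × Bool)) :
    (signedPermMatrix (π * π') : Matrix X X 𝕜) = signedPermMatrix π * signedPermMatrix π' := by
  ext a b
  change signedBasis (π (π' (b, false))) a = (signedPermMatrix π *ᵥ signedBasis (π' (b, false))) a
  rw [signedPermMatrix_mulVec_signedBasis hπ]

lemma signedPermMatrix_mem_unitaryGroup {π : Perm (X × Bool)} (hπ : π ∈ hyperoctahedral X) :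
    (signedPermMatrix π : Matrix X X 𝕜) ∈ unitaryGroup X 𝕜 := by
  rw [mem_unitaryGroup_iff']
  ext b b'
  change star (signedBasis (π (b, false))) ⬝ᵥ signedBasis (π (b', false)) = _
  simp only [star_signedBasis_dotProduct, ← apply_signFlip_of_mem_hyperoctahedral hπ,
    π.injective.eq_iff]
  simp [signFlip, one_apply]

lemma signedPermMatrix_injOn :
    Set.InjOn (signedPermMatrix : Perm (X × Bool) → Matrix X X 𝕜) (hyperoctahedral X) := by
  intro π hπ π' hπ' h
  have hfalse (b : X) : π (b, false) = π' (b, false) :=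
    signedBasis_injective (𝕜 := 𝕜) (funext fun a => congrFun₂ h a b)
  ext1 ⟨b, _ | _⟩
  · exact hfalse b
  · change π (signFlip X (b, false)) = π' (signFlip X (b, false))
    rw [apply_signFlip_of_mem_hyperoctahedral hπ, apply_signFlip_of_mem_hyperoctahedral hπ', hfalse]

variable (X 𝕜) in
def signedPermUnitaryHom : hyperoctahedral X →* unitaryGroup X 𝕜 where
  toFun π := ⟨signedPermMatrix π, signedPermMatrix_mem_unitaryGroup π.2⟩
  map_one' := Subtype.ext signedPermMatrix_one
  map_mul' π π' := Subtype.ext (signedPermMatrix_mul π.2 π')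

lemma signedPermUnitaryHom_injective : Function.Injective (signedPermUnitaryHom X 𝕜) :=
  fun π π' h => Subtype.ext (signedPermMatrix_injOn π.2 π'.2 (congrArg Subtype.val h))

lemma mem_range_signedPermUnitaryHom_iff (M : unitaryGroup X 𝕜) :
    M ∈ (signedPermUnitaryHom X 𝕜).range ↔
      ∀ a b, (M : Matrix X X 𝕜) a b = 0 ∨ (M : Matrix X X 𝕜) a b = 1 ∨
        (M : Matrix X X 𝕜) a b = -1 := by
  constructor
  · rintro ⟨π, rfl⟩ a b
    change signedBasis (π.1 (b, false)) a = 0 ∨ signedBasis (π.1 (b, false)) a = 1 ∨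
      signedBasis (π.1 (b, false)) a = -1
    simp only [signedBasis, Pi.single_apply]
    split_ifs <;> simp
  · intro hM
    obtain ⟨σ, hσ⟩ := exists_perm_ne_zero_iff_of_mem_unitaryGroup M.2 fun a b => by
      rcases hM a b with h | h | h <;> simp [h]
    let π : Perm (X × Bool) :=
      prodShear σ fun b => if (M : Matrix X X 𝕜) (σ b) b = 1 then Equiv.refl Bool else boolNot
    have hπ : π ∈ hyperoctahedral X := by
      rw [Subgroup.mem_centralizer_singleton_iff]
      ext1 ⟨b, s⟩
      simp only [Perm.mul_apply, π, signFlip, prodShear_apply, prodCongr_apply, Prod.map, refl_apply]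
      split_ifs <;> simp
    refine ⟨⟨π, hπ⟩, Subtype.ext ?_⟩
    ext a b
    change signedBasis (π (b, false)) a = (M : Matrix X X 𝕜) a b
    by_cases hab : σ b = a
    · subst hab
      rcases hM (σ b) b with h | h | h
      · exact absurd h ((hσ _ _).mpr rfl)
      · simp [π, signedBasis, h]
      · norm_num [π, signedBasis, h]
    · have h0 : (M : Matrix X X 𝕜) a b = 0 := not_not.mp (mt (hσ a b).mp hab)
      simp [π, signedBasis, Ne.symm hab, h0]

end Hyperoctahedral

section BlockPerm

variable {X Y Z : Type*}

def hyperoctahedralProdPermHom (e : (X × Bool) ⊕ Y ≃ Z) :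
    hyperoctahedral X × Perm Y →* Perm Z :=
  e.permCongrHom.toMonoidHom.comp
    ((Perm.sumCongrHom _ _).comp ((hyperoctahedral X).subtype.prodMap (MonoidHom.id _)))

lemma hyperoctahedralProdPermHom_injective (e : (X × Bool) ⊕ Y ≃ Z) :
    Function.Injective (hyperoctahedralProdPermHom e) :=
  e.permCongrHom.injective.comp (Perm.sumCongrHom_injective.comp
    (Prod.map_injective.mpr ⟨Subtype.val_injective, Function.injective_id⟩))

lemma range_hyperoctahedralProdPermHom [Finite X] [Finite Y] (e : (X × Bool) ⊕ Y ≃ Z) :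
    (hyperoctahedralProdPermHom e).range =
      Subgroup.centralizer {e.permCongr (sumCongr (signFlip X) 1)} := by
  ext ρ
  obtain ⟨σ, rfl⟩ := e.permCongrHom.surjective ρ
  change _ ↔ _ ∈ Subgroup.centralizer {e.permCongrHom (sumCongr (signFlip X) 1)}
  rw [MulEquiv.apply_mem_centralizer_singleton_iff,
    Perm.mem_centralizer_sumCongr_one_iff signFlip_apply_ne]
  constructor
  · rintro ⟨⟨κ, τ⟩, h⟩
    exact ⟨κ, κ.2, τ, e.permCongrHom.injective h⟩
  · rintro ⟨κ, hκ, τ, rfl⟩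
    exact ⟨(⟨κ, hκ⟩, τ), rfl⟩

end BlockPerm

section PairIndex

def pairIndexEquiv (p q : ℕ) : (Fin p × Bool) ⊕ Fin q ≃ Fin (2 * p + q) :=
  (sumCongr ((prodCongr (Equiv.refl _) finTwoEquiv.symm).trans
    (finProdFinEquiv.trans (finCongr (mul_comm p 2)))) (Equiv.refl _)).trans finSumFinEquiv

variable {p q : ℕ}

lemma pairIndexEquiv_inl_val (a : Fin p) (s : Bool) :
    (pairIndexEquiv p q (Sum.inl (a, s)) : ℕ) = 2 * a + s.toNat := by
  cases s <;> simp [pairIndexEquiv, finTwoEquiv, add_comm]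

lemma pairIndexEquiv_inr_val (b : Fin q) : (pairIndexEquiv p q (Sum.inr b) : ℕ) = 2 * p + b := by
  simp [pairIndexEquiv]

variable (p q) in
def pairSwap : Perm (Fin (2 * p + q)) :=
  (pairIndexEquiv p q).permCongr (sumCongr (signFlip (Fin p)) 1)

lemma Jplus_eq_permMatrixHom_pairSwap : Jplus p q = permMatrixHom (pairSwap p q) := by
  ext i j
  obtain ⟨z, rfl⟩ := (pairIndexEquiv p q).surjective i
  obtain ⟨w, rfl⟩ := (pairIndexEquiv p q).surjective j
  simp only [permMatrixHom_apply_apply, pairSwap, permCongr_apply, symm_apply_apply,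
    (pairIndexEquiv p q).injective.eq_iff]
  rcases z with ⟨a, _ | _⟩ | b <;> rcases w with ⟨c, _ | _⟩ | d <;>
    simp [Jplus, pairIndexEquiv_inl_val, pairIndexEquiv_inr_val, signFlip, Fin.ext_iff]
  all_goals intros; (try split_ifs) <;> first | rfl | omega

end PairIndex

/-- The group `S̄_n = {U ∈ U_n | U J = J Ū, U_{ij} ∈ {0,1}}` (with `J = J_+(p,q)`) is
isomorphic to `H_p × S_q`, where `H_p` is the hyperoctahedral group of `p × p`
monomial matrices with nonzero entries `±1`. -/
theorem stmt_10 (p q : ℕ) :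
    ∃ (H : Subgroup (Matrix.unitaryGroup (Fin (2 * p + q)) ℂ))
      (Hp : Subgroup (Matrix.unitaryGroup (Fin p) ℂ)),
      (∀ U : Matrix.unitaryGroup (Fin (2 * p + q)) ℂ,
        U ∈ H ↔ ((U : Matrix (Fin (2 * p + q)) (Fin (2 * p + q)) ℂ) * Jplus p q =
            Jplus p q *
              (U : Matrix (Fin (2 * p + q)) (Fin (2 * p + q)) ℂ).map (starRingEnd ℂ) ∧
          ∀ i j, (U : Matrix (Fin (2 * p + q)) (Fin (2 * p + q)) ℂ) i j = 0 ∨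
            (U : Matrix (Fin (2 * p + q)) (Fin (2 * p + q)) ℂ) i j = 1)) ∧
      (∀ M : Matrix.unitaryGroup (Fin p) ℂ,
        M ∈ Hp ↔ ∀ i j, (M : Matrix (Fin p) (Fin p) ℂ) i j = 0 ∨
          (M : Matrix (Fin p) (Fin p) ℂ) i j = 1 ∨
          (M : Matrix (Fin p) (Fin p) ℂ) i j = -1) ∧
      Nonempty (H ≃* Hp × Equiv.Perm (Fin q)) := by
  let Φ := (permUnitaryHom (Fin (2 * p + q)) ℂ).comp
    (hyperoctahedralProdPermHom (pairIndexEquiv p q))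
  have hΦ : Function.Injective Φ :=
    permUnitaryHom_injective.comp (hyperoctahedralProdPermHom_injective _)
  refine ⟨Φ.range, (signedPermUnitaryHom (Fin p) ℂ).range, fun U => ?_,
    mem_range_signedPermUnitaryHom_iff, ⟨(MonoidHom.ofInjective hΦ).symm.trans
      ((MonoidHom.ofInjective signedPermUnitaryHom_injective).prodCongr (MulEquiv.refl _))⟩⟩
  rw [Jplus_eq_permMatrixHom_pairSwap, exists_mem_centralizer_permMatrixHom_eq_iff U.2, pairSwap,
    ← range_hyperoctahedralProdPermHom, MonoidHom.range_comp, Subgroup.mem_map]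
  exact exists_congr fun ρ => and_congr_right fun _ => Subtype.ext_iff
end

section
/- With the signed Kronecker symbols of the super-easy calculus (defined relative to a super-identity $J$ with involution $i \mapsto \bar i$ and signs $\varepsilon(i)$), the adjoint of the map $T_\pi$ associated to the one-block partition $1_{k,l}$ equals the map associated to its upside-down turning: $T_{1_{k,l}}^* = T_{1_{l,k}}$. -/
/-!
The sequence `(i, j̄)` read off for `1_{l,k}` is the reversal of the sequence `(j, ī)` for
`1_{k,l}`, with every entry barred. Reversal preserves which pairs of positions have equal
parity and `bar` is an involution, so the alternating condition holds for one iff it holds for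
the other; the sign factors agree as a product, and they are real, so conjugation fixes them.
-/

/-- The sequence `(j_1,…,j_l, ī_k,…,ī_1)` appearing in the signed Kronecker symbol of
the one-block partition `1_{k,l}`. -/
def altSeq (n k l : ℕ) (bar : Fin n → Fin n) (I : Fin k → Fin n) (Jv : Fin l → Fin n) :
    Fin (l + k) → Fin n :=
  fun m => if h : (m : ℕ) < l then Jv ⟨m, h⟩
    else bar (I ⟨k - 1 - ((m : ℕ) - l), by omega⟩)

/-- The alternating condition `l_1 = l̄_2 = l_3 = l̄_4 = ⋯` on a sequence. -/
def altCond (n m : ℕ) (bar : Fin n → Fin n) (L : Fin m → Fin n) : Prop :=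
  ∀ a b : Fin m,
    ((a : ℕ) % 2 = (b : ℕ) % 2 → L a = L b) ∧
    ((a : ℕ) % 2 ≠ (b : ℕ) % 2 → L a = bar (L b))

open Classical in
/-- The signed Kronecker symbol of the one-block partition `1_{k,l}`:
`δ_{1_{k,l}}(i,j) = ε(i_1)ε(i_3)⋯ × ε(j_1)ε(j_3)⋯ × δ_alt(j_1,…,j_l,ī_k,…,ī_1)`. -/
noncomputable def delta1 (n k l : ℕ) (bar : Fin n → Fin n) (eps : Fin n → ℂ)
    (I : Fin k → Fin n) (Jv : Fin l → Fin n) : ℂ :=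
  (∏ a : Fin k, if (a : ℕ) % 2 = 0 then eps (I a) else 1) *
  (∏ b : Fin l, if (b : ℕ) % 2 = 0 then eps (Jv b) else 1) *
  (if altCond n (l + k) bar (altSeq n k l bar I Jv) then 1 else 0)

/-- The map `T_{1_{k,l}} : (ℂ^n)^{⊗k} → (ℂ^n)^{⊗l}` as a matrix. -/
noncomputable def T1 (n k l : ℕ) (bar : Fin n → Fin n) (eps : Fin n → ℂ) :
    Matrix (Fin l → Fin n) (Fin k → Fin n) ℂ :=
  Matrix.of fun Jv I => delta1 n k l bar eps I Jv


section AltCond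

variable {n m : ℕ} {bar : Fin n → Fin n}

lemma altCond_comp_cast {m' : ℕ} (h : m = m') (L : Fin m' → Fin n) :
    altCond n m bar (L ∘ Fin.cast h) ↔ altCond n m' bar L := by
  subst h
  rfl

lemma altCond.bar_comp_rev (hbar : Function.Involutive bar) {L : Fin m → Fin n}
    (hL : altCond n m bar L) : altCond n m bar (bar ∘ L ∘ Fin.rev) := by
  intro a b
  -- reversal `a ↦ m - 1 - a` preserves whether two indices have the same parity
  have hpar : (a.rev : ℕ) % 2 = (b.rev : ℕ) % 2 ↔ (a : ℕ) % 2 = (b : ℕ) % 2 := by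
    simp only [Fin.val_rev]
    omega
  refine ⟨fun h => ?_, fun h => ?_⟩
  · simp only [Function.comp_apply, (hL a.rev b.rev).1 (hpar.2 h)]
  · simp only [Function.comp_apply, (hL a.rev b.rev).2 (hpar.not.2 h), hbar (L b.rev)]

lemma altCond_bar_comp_rev_iff (hbar : Function.Involutive bar) (L : Fin m → Fin n) :
    altCond n m bar (bar ∘ L ∘ Fin.rev) ↔ altCond n m bar L := by
  refine ⟨fun h => ?_, altCond.bar_comp_rev hbar⟩
  have hL : bar ∘ (bar ∘ L ∘ Fin.rev) ∘ Fin.rev = L := by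
    ext1 a
    simp only [Function.comp_apply, Fin.rev_rev, hbar (L a)]
  simpa only [hL] using h.bar_comp_rev hbar

end AltCond

lemma altSeq_swap (n k l : ℕ) {bar : Fin n → Fin n} (hbar : Function.Involutive bar)
    (I : Fin k → Fin n) (Jv : Fin l → Fin n) :
    altSeq n l k bar Jv I =
      bar ∘ altSeq n k l bar I Jv ∘ Fin.rev ∘ Fin.cast (Nat.add_comm k l) := by
  ext1 m
  simp only [altSeq, Function.comp_apply, Fin.val_rev, Fin.val_cast]
  split_ifs with hk hl hl
  · omega
  · rw [hbar]
    congr 1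
    ext
    simp only
    omega
  · congr 2
    ext
    simp only
    omega
  · omega

lemma altCond_altSeq_swap (n k l : ℕ) {bar : Fin n → Fin n} (hbar : Function.Involutive bar)
    (I : Fin k → Fin n) (Jv : Fin l → Fin n) :
    altCond n (k + l) bar (altSeq n l k bar Jv I) ↔
      altCond n (l + k) bar (altSeq n k l bar I Jv) := by
  rw [altSeq_swap n k l hbar, ← altCond_bar_comp_rev_iff hbar (altSeq n k l bar I Jv)]
  exact altCond_comp_cast (Nat.add_comm k l) (bar ∘ altSeq n k l bar I Jv ∘ Fin.rev)

lemma delta1_swap (n k l : ℕ) {bar : Fin n → Fin n} (hbar : Function.Involutive bar)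
    (eps : Fin n → ℂ) (I : Fin k → Fin n) (Jv : Fin l → Fin n) :
    delta1 n k l bar eps I Jv = delta1 n l k bar eps Jv I := by
  classical
  simp only [delta1, altCond_altSeq_swap n k l hbar I Jv]
  ring

lemma star_delta1 (n k l : ℕ) (bar : Fin n → Fin n) {eps : Fin n → ℂ}
    (heps : ∀ i, star (eps i) = eps i) (I : Fin k → Fin n) (Jv : Fin l → Fin n) :
    star (delta1 n k l bar eps I Jv) = delta1 n k l bar eps I Jv := by
  classical
  simp only [delta1, star_mul', star_prod, apply_ite star, heps, star_one, star_zero]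

theorem stmt_16_general (n k l : ℕ)
    (bar : Fin n → Fin n) (hbar : ∀ i, bar (bar i) = i)
    (eps : Fin n → ℂ) (heps : ∀ i, eps i = 1 ∨ eps i = -1) :
    (T1 n k l bar eps).conjTranspose = T1 n l k bar eps := by
  have heps_real : ∀ i, star (eps i) = eps i := fun i => by
    rcases heps i with h | h <;> simp [h]
  ext I Jv
  rw [Matrix.conjTranspose_apply, T1, T1, Matrix.of_apply, Matrix.of_apply,
    star_delta1 n k l bar heps_real, delta1_swap n k l hbar]

/-- With the signed Kronecker symbols of the super-easy calculus, the adjoint of the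
map of the one-block partition `1_{k,l}` is the map of its upside-down turning:
`T_{1_{k,l}}^* = T_{1_{l,k}}`. -/
theorem stmt_16 (n k l : ℕ) (hkl : Even (k + l))
    (bar : Fin n → Fin n) (hbar : ∀ i, bar (bar i) = i)
    (eps : Fin n → ℂ) (heps : ∀ i, eps i = 1 ∨ eps i = -1)
    (ε : ℂ) (hε : ε = 1 ∨ ε = -1) (hcompat : ∀ i, eps i * eps (bar i) = ε) :
    (T1 n k l bar eps).conjTranspose = T1 n l k bar eps :=
  stmt_16_general n k l bar hbar eps heps
end
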